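/- arXiv:1001.3312 — 4 statements merged into one kernel-verified Lean document; each statement's English description precedes it below -/
import Mathlib

section
/- Let V₀ : (0,∞) → M₂(ℂ) be continuous, E₁ ∈ ℂ, and let u₁ : (0,∞) → M₂(ℂ) be a twice differentiable matrix function with u₁(r) invertible for all r satisfying −u₁''(r) + V₀(r)u₁(r) = E₁ u₁(r). Set w₁(r) = u₁'(r)u₁(r)⁻¹ and V₁(r) = V₀(r) − 2w₁'(r). Then for any k² ∈ ℂ and any twice differentiable (vector- or matrix-valued) function ψ satisfying −ψ''(r) + V₀(r)ψ(r) = k² ψ(r), the function φ(r) = w₁(r)ψ(r) − ψ'(r) satisfies −φ''(r) + V₁(r)φ(r) = k² φ(r) for all r. -/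
open Matrix Set Filter Topology

/-!
The superpotential satisfies the Riccati equation `w₁' = V₀ - E₁ - w₁²`: differentiate
`u₁' = w₁ u₁` and cancel the invertible `u₁`. With it, `φ = w₁ψ - ψ'` obeys the first-order
equation `φ' = (k² - E₁)ψ - w₁φ`, and differentiating once more and eliminating `w₁²`
yields `φ'' = (V₀ - 2w₁')φ - k²φ`. Every step is a noncommutative ring identity, so `w₁`
need not commute with `V₀`.
-/

section EntrywiseDeriv

variable {𝕜 𝔸 : Type*} [NontriviallyNormedField 𝕜] [NormedRing 𝔸] [NormedAlgebra 𝕜 𝔸]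
  {l m p : Type*}

def HasEntrywiseDerivAt (A : 𝕜 → Matrix l m 𝔸) (A' : Matrix l m 𝔸) (x : 𝕜) : Prop :=
  ∀ i j, HasDerivAt (fun t => A t i j) (A' i j) x

namespace HasEntrywiseDerivAt

variable {A B : 𝕜 → Matrix l m 𝔸} {A' B' : Matrix l m 𝔸} {x : 𝕜}

theorem mul [Fintype m] {C : 𝕜 → Matrix m p 𝔸} {C' : Matrix m p 𝔸}
    (hA : HasEntrywiseDerivAt A A' x) (hC : HasEntrywiseDerivAt C C' x) :
    HasEntrywiseDerivAt (fun t => A t * C t) (A' * C x + A x * C') x := by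
  intro i j
  simp only [mul_apply, Matrix.add_apply]
  rw [← Finset.sum_add_distrib]
  exact HasDerivAt.fun_sum fun k _ => (hA i k).mul (hC k j)

theorem sub (hA : HasEntrywiseDerivAt A A' x) (hB : HasEntrywiseDerivAt B B' x) :
    HasEntrywiseDerivAt (fun t => A t - B t) (A' - B') x :=
  fun i j => (hA i j).sub (hB i j)

theorem const_smul (c : 𝔸) (hA : HasEntrywiseDerivAt A A' x) :
    HasEntrywiseDerivAt (fun t => c • A t) (c • A') x :=
  fun i j => (hA i j).const_mul c

theorem unique (hA : HasEntrywiseDerivAt A A' x) (hA₂ : HasEntrywiseDerivAt A B' x) :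
    A' = B' :=
  Matrix.ext fun i j => (hA i j).unique (hA₂ i j)

theorem congr_of_eventuallyEq (hA : HasEntrywiseDerivAt A A' x) (h : B =ᶠ[𝓝 x] A) :
    HasEntrywiseDerivAt B A' x :=
  fun i j => (hA i j).congr_of_eventuallyEq (h.mono fun _ ht => congrFun (congrFun ht i) j)

theorem hasDerivAt_deriv_apply {D : 𝕜 → Matrix l m 𝔸}
    (hA : ∀ᶠ t in 𝓝 x, HasEntrywiseDerivAt A (D t) t) (hD : HasEntrywiseDerivAt D A' x)
    (i : l) (j : m) : HasDerivAt (deriv fun t => A t i j) (A' i j) x :=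
  (hD i j).congr_of_eventuallyEq (hA.mono fun _ ht => (ht i j).deriv)

end HasEntrywiseDerivAt

end EntrywiseDeriv

section DarbouxAlgebra

variable {R : Type*} [CommRing R] {m p : Type*} [Fintype m] [DecidableEq m]
  (V w w' : Matrix m m R) (E k : R)

theorem riccati_of_schrodinger {u u' u'' : Matrix m m R} (hu : IsUnit u)
    (hwu : w * u = u') (hprod : w' * u + w * u' = u'') (heq : -u'' + V * u = E • u) :
    w' = V - E • 1 - w * w := by
  have hu'' : u'' = V * u - E • u := by rw [← heq]; abel
  have hmul : w' * u = (V - E • 1 - w * w) * u := calc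
    w' * u = u'' - w * u' := eq_sub_of_add_eq hprod
    _ = (V - E • 1 - w * w) * u := by
      rw [hu'', ← hwu]; simp only [sub_mul, smul_mul_assoc, one_mul, mul_assoc]
  exact hu.mul_left_injective hmul

theorem darboux_deriv_eq {ψ ψ' ψ'' : Matrix m p R} (hric : w' = V - E • 1 - w * w)
    (hψ : -ψ'' + V * ψ = k • ψ) :
    w' * ψ + w * ψ' - ψ'' = (k - E) • ψ - w * (w * ψ - ψ') := by
  have hψ'' : ψ'' = V * ψ - k • ψ := by rw [← hψ]; abel
  rw [hψ'', hric]
  simp only [Matrix.sub_mul, Matrix.mul_sub, Matrix.smul_mul, Matrix.mul_assoc, Matrix.one_mul,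
    sub_smul]
  abel

theorem darboux_deriv_deriv_eq {ψ ψ' φ : Matrix m p R} (hric : w' = V - E • 1 - w * w)
    (hφ : φ = w * ψ - ψ') :
    (k - E) • ψ' - (w' * φ + w * ((k - E) • ψ - w * φ)) = (V - (2 : R) • w') * φ - k • φ := by
  have hww : w * w = V - E • 1 - w' := by rw [hric]; abel
  rw [Matrix.mul_sub, ← Matrix.mul_assoc, hww, hφ]
  simp only [Matrix.sub_mul, Matrix.mul_sub, Matrix.smul_mul, Matrix.mul_smul, Matrix.one_mul,
    smul_sub, sub_smul, two_smul, Matrix.add_mul]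
  abel

end DarbouxAlgebra

section DarbouxCalculus

variable {𝕜 𝔸 : Type*} [NontriviallyNormedField 𝕜] [NormedCommRing 𝔸] [NormedAlgebra 𝕜 𝔸]
  {m p : Type*} [Fintype m] [DecidableEq m] {w : 𝕜 → Matrix m m 𝔸} {V w' : Matrix m m 𝔸}
  {E k : 𝔸} {x : 𝕜}

theorem riccati_of_hasEntrywiseDerivAt {u u' : 𝕜 → Matrix m m 𝔸} {u'' : Matrix m m 𝔸}
    (hu : HasEntrywiseDerivAt u (u' x) x) (hu' : HasEntrywiseDerivAt u' u'' x)
    (hw : HasEntrywiseDerivAt w w' x) (hwu : (fun t => w t * u t) =ᶠ[𝓝 x] u')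
    (hunit : IsUnit (u x)) (heq : -u'' + V * u x = E • u x) :
    w' = V - E • 1 - w x * w x :=
  riccati_of_schrodinger V (w x) w' E hunit hwu.eq_of_nhds
    (((hw.mul hu).congr_of_eventuallyEq hwu.symm).unique hu') heq

theorem hasEntrywiseDerivAt_darboux {ψ ψ' : 𝕜 → Matrix m p 𝔸} {ψ'' : Matrix m p 𝔸}
    (hric : w' = V - E • 1 - w x * w x) (hw : HasEntrywiseDerivAt w w' x)
    (hψ : HasEntrywiseDerivAt ψ (ψ' x) x) (hψ' : HasEntrywiseDerivAt ψ' ψ'' x)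
    (heq : -ψ'' + V * ψ x = k • ψ x) :
    HasEntrywiseDerivAt (fun t => w t * ψ t - ψ' t)
      ((k - E) • ψ x - w x * (w x * ψ x - ψ' x)) x :=
  darboux_deriv_eq V (w x) w' E k hric heq ▸ (hw.mul hψ).sub hψ'

end DarbouxCalculus

theorem firstOrder_SUSY_intertwining_general {n : ℕ}
    (V₀ u₁ u₁' u₁'' : ℝ → Matrix (Fin 2) (Fin 2) ℂ) (E₁ : ℂ)
    (hu₁ : ∀ r ∈ Ioi (0:ℝ), ∀ i j, HasDerivAt (fun t => u₁ t i j) (u₁' r i j) r)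
    (hu₁' : ∀ r ∈ Ioi (0:ℝ), ∀ i j, HasDerivAt (fun t => u₁' t i j) (u₁'' r i j) r)
    (hinv₁ : ∀ r ∈ Ioi (0:ℝ), IsUnit (u₁ r))
    (heq₁ : ∀ r ∈ Ioi (0:ℝ), -u₁'' r + V₀ r * u₁ r = E₁ • u₁ r)
    (w₁ w₁d V₁ : ℝ → Matrix (Fin 2) (Fin 2) ℂ)
    (hw₁ : ∀ r, w₁ r = u₁' r * (u₁ r)⁻¹)
    (hw₁d : ∀ r ∈ Ioi (0:ℝ), ∀ i j, HasDerivAt (fun t => w₁ t i j) (w₁d r i j) r)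
    (hV₁ : ∀ r, V₁ r = V₀ r - (2:ℂ) • w₁d r)
    (k2 : ℂ) (ψ ψ' ψ'' : ℝ → Matrix (Fin 2) (Fin n) ℂ)
    (hψ : ∀ r ∈ Ioi (0:ℝ), ∀ i j, HasDerivAt (fun t => ψ t i j) (ψ' r i j) r)
    (hψ' : ∀ r ∈ Ioi (0:ℝ), ∀ i j, HasDerivAt (fun t => ψ' t i j) (ψ'' r i j) r)
    (hψeq : ∀ r ∈ Ioi (0:ℝ), -ψ'' r + V₀ r * ψ r = k2 • ψ r)
    (φ : ℝ → Matrix (Fin 2) (Fin n) ℂ)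
    (hφ : ∀ r, φ r = w₁ r * ψ r - ψ' r) :
    ∀ r ∈ Ioi (0:ℝ),
      (∀ i j, DifferentiableAt ℝ (fun t => φ t i j) r) ∧
      (∀ i j, HasDerivAt (deriv (fun t => φ t i j))
        ((V₁ r * φ r - k2 • φ r) i j) r) := by
  obtain rfl : φ = fun t => w₁ t * ψ t - ψ' t := funext hφ
  have hric (t : ℝ) (ht : t ∈ Ioi 0) : w₁d t = V₀ t - E₁ • 1 - w₁ t * w₁ t := by
    have hwu : (fun s => w₁ s * u₁ s) =ᶠ[𝓝 t] u₁' :=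
      eventually_of_mem (Ioi_mem_nhds ht) fun s hs => show w₁ s * u₁ s = u₁' s by
        rw [hw₁, nonsing_inv_mul_cancel_right _ _ ((isUnit_iff_isUnit_det _).1 (hinv₁ s hs))]
    exact riccati_of_hasEntrywiseDerivAt (hu₁ t ht) (hu₁' t ht) (hw₁d t ht) hwu (hinv₁ t ht) (heq₁ t ht)
  have hφd (t : ℝ) (ht : t ∈ Ioi 0) : HasEntrywiseDerivAt (fun s => w₁ s * ψ s - ψ' s)
      ((k2 - E₁) • ψ t - w₁ t * (w₁ t * ψ t - ψ' t)) t :=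
    hasEntrywiseDerivAt_darboux (hric t ht) (hw₁d t ht) (hψ t ht) (hψ' t ht) (hψeq t ht)
  intro r hr
  refine ⟨fun i j => (hφd r hr i j).differentiableAt, ?_⟩
  have hφdd := (HasEntrywiseDerivAt.const_smul (k2 - E₁) (hψ r hr)).sub
    (HasEntrywiseDerivAt.mul (hw₁d r hr) (hφd r hr))
  rw [darboux_deriv_deriv_eq (V₀ r) (w₁ r) (w₁d r) E₁ k2 (hric r hr) rfl, ← hV₁] at hφdd
  exact hφdd.hasDerivAt_deriv_apply (eventually_of_mem (Ioi_mem_nhds hr) hφd)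

/-- First-order (Darboux) SUSY transformation for the matrix Schrödinger equation:
if `-ψ'' + V₀ψ = k²ψ`, then `φ = w₁ψ - ψ'` satisfies `-φ'' + V₁φ = k²φ` with
`V₁ = V₀ - 2w₁'`, where `w₁ = u₁'u₁⁻¹` for an invertible matrix solution `u₁` at
factorization energy `E₁`. -/
theorem firstOrder_SUSY_intertwining {n : ℕ}
    (V₀ u₁ u₁' u₁'' : ℝ → Matrix (Fin 2) (Fin 2) ℂ) (E₁ : ℂ)
    (hV₀ : ContinuousOn V₀ (Ioi 0))
    (hu₁ : ∀ r ∈ Ioi (0:ℝ), ∀ i j, HasDerivAt (fun t => u₁ t i j) (u₁' r i j) r)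
    (hu₁' : ∀ r ∈ Ioi (0:ℝ), ∀ i j, HasDerivAt (fun t => u₁' t i j) (u₁'' r i j) r)
    (hinv₁ : ∀ r ∈ Ioi (0:ℝ), IsUnit (u₁ r))
    (heq₁ : ∀ r ∈ Ioi (0:ℝ), -u₁'' r + V₀ r * u₁ r = E₁ • u₁ r)
    (w₁ w₁d V₁ : ℝ → Matrix (Fin 2) (Fin 2) ℂ)
    (hw₁ : ∀ r, w₁ r = u₁' r * (u₁ r)⁻¹)
    (hw₁d : ∀ r ∈ Ioi (0:ℝ), ∀ i j, HasDerivAt (fun t => w₁ t i j) (w₁d r i j) r)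
    (hV₁ : ∀ r, V₁ r = V₀ r - (2:ℂ) • w₁d r)
    (k2 : ℂ) (ψ ψ' ψ'' : ℝ → Matrix (Fin 2) (Fin n) ℂ)
    (hψ : ∀ r ∈ Ioi (0:ℝ), ∀ i j, HasDerivAt (fun t => ψ t i j) (ψ' r i j) r)
    (hψ' : ∀ r ∈ Ioi (0:ℝ), ∀ i j, HasDerivAt (fun t => ψ' t i j) (ψ'' r i j) r)
    (hψeq : ∀ r ∈ Ioi (0:ℝ), -ψ'' r + V₀ r * ψ r = k2 • ψ r)
    (φ : ℝ → Matrix (Fin 2) (Fin n) ℂ)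
    (hφ : ∀ r, φ r = w₁ r * ψ r - ψ' r) :
    ∀ r ∈ Ioi (0:ℝ),
      (∀ i j, DifferentiableAt ℝ (fun t => φ t i j) r) ∧
      (∀ i j, HasDerivAt (deriv (fun t => φ t i j))
        ((V₁ r * φ r - k2 • φ r) i j) r) :=
  firstOrder_SUSY_intertwining_general V₀ u₁ u₁' u₁'' E₁ hu₁ hu₁' hinv₁ heq₁ w₁ w₁d V₁ hw₁ hw₁d hV₁
    k2 ψ ψ' ψ'' hψ hψ' hψeq φ hφ
end

section
/- Let V : (0,∞) → M₂(ℂ) be continuous, E₁, E₂ ∈ ℂ, and let u₁, u₂ : (0,∞) → M₂(ℂ) be twice differentiable matrix solutions of −u_j'' + V u_j = E_j u_j with u₁(r), u₂(r) invertible for all r. Set w_j = u_j'u_j⁻¹ and assume w₂(r) − w₁(r) is invertible for all r, so that ũ₂(r) = (w₁(r) − w₂(r))u₂(r) is invertible, and set w̃₂ = ũ₂'ũ₂⁻¹. Then the two-fold superpotential W₂(r) = w₁(r) + w̃₂(r) satisfies W₂(r) = (E₁ − E₂)(w₂(r) − w₁(r))⁻¹ for all r. -/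
/-!
Each superpotential satisfies the Riccati equation `w' = V - E - w²`, so `d = w₁ - w₂` has
derivative `E₂ - E₁ - w₁² + w₂²`, and the Leibniz rule for `ũ₂ = d u₂` gives
`w̃₂ = d' d⁻¹ + d w₂ d⁻¹`. Writing `w₁ = w₁ d d⁻¹`, the numerator of `w₁ + w̃₂` is
`w₁ d + d' + d w₂ = E₂ - E₁`, a scalar.
-/

open Matrix Set
open scoped Ring

theorem Ring.inverse_neg {R : Type*} [Ring R] (a : R) : (-a)⁻¹ʳ = -a⁻¹ʳ := by
  by_cases ha : IsUnit a
  · obtain ⟨u, rfl⟩ := ha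
    rw [← Units.val_neg, Ring.inverse_unit, Ring.inverse_unit, inv_neg, Units.val_neg]
  · rw [Ring.inverse_non_unit _ ha, Ring.inverse_non_unit _ (by rwa [IsUnit.neg_iff]), neg_zero]

section Algebra
variable {A : Type*} [Ring A]

theorem leibniz_mul_ringInverse {a a' b b' : A} (ha : IsUnit a) (hb : IsUnit b) :
    (a' * b + a * b') * (a * b)⁻¹ʳ = a' * a⁻¹ʳ + a * (b' * b⁻¹ʳ) * a⁻¹ʳ := by
  rw [Ring.inverse_mul (.inl ha), add_mul, ← mul_assoc, mul_assoc a', Ring.mul_inverse_cancel b hb,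
    mul_one, ← mul_assoc, mul_assoc a]

variable {K : Type*} [CommRing K] [Algebra K A]

theorem mul_ringInverse_of_schrodinger {V u u'' : A} {E : K} (h : -u'' + V * u = E • u)
    (hu : IsUnit u) : u'' * u⁻¹ʳ = V - E • 1 := by
  have hu'' : u'' = V * u - E • u := by rw [← h]; abel
  rw [hu'', sub_mul, mul_assoc, smul_mul_assoc, Ring.mul_inverse_cancel u hu, mul_one]

theorem twofold_superpotential_identity {w₁ w₂ : A} {E₁ E₂ : K} (hd : IsUnit (w₁ - w₂)) :
    w₁ + (((E₂ - E₁) • 1 - w₁ ^ 2 + w₂ ^ 2) * (w₁ - w₂)⁻¹ʳ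
      + (w₁ - w₂) * w₂ * (w₁ - w₂)⁻¹ʳ) = (E₁ - E₂) • (w₂ - w₁)⁻¹ʳ := by
  have key : w₁ * (w₁ - w₂) + ((E₂ - E₁) • 1 - w₁ ^ 2 + w₂ ^ 2) + (w₁ - w₂) * w₂
      = (E₂ - E₁) • (1 : A) := by
    generalize (E₂ - E₁) • (1 : A) = e
    noncomm_ring
  calc _ = (w₁ * (w₁ - w₂) + ((E₂ - E₁) • 1 - w₁ ^ 2 + w₂ ^ 2) + (w₁ - w₂) * w₂)
        * (w₁ - w₂)⁻¹ʳ := by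
          simp only [add_mul, mul_assoc w₁ (w₁ - w₂), Ring.mul_inverse_cancel _ hd, mul_one]
          abel
    _ = _ := by
      rw [key, smul_one_mul, ← neg_sub w₁, Ring.inverse_neg, smul_neg, ← neg_smul, neg_sub]

end Algebra

section BanachAlgebra
variable {A : Type*} [NormedRing A] [NormedAlgebra ℝ A] [HasSummableGeomSeries A]
  {r : ℝ}

theorem HasDerivAt.ringInverse {f : ℝ → A} {f' : A} (hf : HasDerivAt f f' r)
    (hunit : IsUnit (f r)) :
    HasDerivAt (fun t => (f t)⁻¹ʳ) (-((f r)⁻¹ʳ * f' * (f r)⁻¹ʳ)) r := by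
  obtain ⟨x, hx⟩ := hunit
  have hinv := hasFDerivAt_ringInverse (𝕜 := ℝ) x
  rw [hx] at hinv
  simpa [← hx, Ring.inverse_unit, Function.comp_def] using hinv.comp_hasDerivAt r hf

theorem hasDerivAt_superpotential_of_schrodinger {K : Type*} [CommRing K] [Algebra K A]
    {u u' : ℝ → A} {u'' V : A} {E : K}
    (hu : HasDerivAt u (u' r) r) (hu' : HasDerivAt u' u'' r) (hunit : IsUnit (u r))
    (hschr : -u'' + V * u r = E • u r) :
    HasDerivAt (fun t => u' t * (u t)⁻¹ʳ) (V - E • 1 - (u' r * (u r)⁻¹ʳ) ^ 2) r := by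
  refine (hu'.mul (hu.ringInverse hunit)).congr_deriv ?_
  rw [← mul_ringInverse_of_schrodinger hschr hunit]
  noncomm_ring

end BanachAlgebra

-- Any norm would do for the entrywise derivatives; this one makes matrices a Banach algebra.
attribute [local instance] Matrix.linftyOpNormedAddCommGroup Matrix.linftyOpNormedSpace
  Matrix.linftyOpNormedRing Matrix.linftyOpNormedAlgebra

theorem Matrix.hasDerivAt_iff {m n 𝕜 : Type*} [Fintype m] [Fintype n] [RCLike 𝕜]
    {u : ℝ → Matrix m n 𝕜} {u' : Matrix m n 𝕜} {r : ℝ} :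
    HasDerivAt u u' r ↔ ∀ i j, HasDerivAt (fun t => u t i j) (u' i j) r := by
  let e : (m → n → 𝕜) ≃L[ℝ] Matrix m n 𝕜 := (Matrix.ofLinearEquiv ℝ).toContinuousLinearEquiv
  constructor
  · intro h i j
    exact hasDerivAt_pi.1 (hasDerivAt_pi.1 (e.symm.hasFDerivAt.comp_hasDerivAt r h) i) j
  · intro h
    exact e.hasFDerivAt.comp_hasDerivAt r (hasDerivAt_pi.2 fun i => hasDerivAt_pi.2 (h i))

theorem twofold_superpotential_eq_general
    (V u₁ u₁' u₁'' u₂ u₂' u₂'' : ℝ → Matrix (Fin 2) (Fin 2) ℂ) (E₁ E₂ : ℂ)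
    (hu₁ : ∀ r ∈ Ioi (0:ℝ), ∀ i j, HasDerivAt (fun t => u₁ t i j) (u₁' r i j) r)
    (hu₁' : ∀ r ∈ Ioi (0:ℝ), ∀ i j, HasDerivAt (fun t => u₁' t i j) (u₁'' r i j) r)
    (hu₂ : ∀ r ∈ Ioi (0:ℝ), ∀ i j, HasDerivAt (fun t => u₂ t i j) (u₂' r i j) r)
    (hu₂' : ∀ r ∈ Ioi (0:ℝ), ∀ i j, HasDerivAt (fun t => u₂' t i j) (u₂'' r i j) r)
    (heq₁ : ∀ r ∈ Ioi (0:ℝ), -u₁'' r + V r * u₁ r = E₁ • u₁ r)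
    (heq₂ : ∀ r ∈ Ioi (0:ℝ), -u₂'' r + V r * u₂ r = E₂ • u₂ r)
    (hinv₁ : ∀ r ∈ Ioi (0:ℝ), IsUnit (u₁ r))
    (hinv₂ : ∀ r ∈ Ioi (0:ℝ), IsUnit (u₂ r))
    (w₁ w₂ : ℝ → Matrix (Fin 2) (Fin 2) ℂ)
    (hw₁ : ∀ r, w₁ r = u₁' r * (u₁ r)⁻¹)
    (hw₂ : ∀ r, w₂ r = u₂' r * (u₂ r)⁻¹)
    (hinvw : ∀ r ∈ Ioi (0:ℝ), IsUnit (w₂ r - w₁ r))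
    (tu₂ tu₂' : ℝ → Matrix (Fin 2) (Fin 2) ℂ)
    (htu₂ : ∀ r, tu₂ r = (w₁ r - w₂ r) * u₂ r)
    (htu₂' : ∀ r ∈ Ioi (0:ℝ), ∀ i j, HasDerivAt (fun t => tu₂ t i j) (tu₂' r i j) r)
    (tw₂ : ℝ → Matrix (Fin 2) (Fin 2) ℂ)
    (htw₂ : ∀ r, tw₂ r = tu₂' r * (tu₂ r)⁻¹) :
    ∀ r ∈ Ioi (0:ℝ),
      IsUnit (tu₂ r) ∧
      w₁ r + tw₂ r = (E₁ - E₂) • (w₂ r - w₁ r)⁻¹ := by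
  intro r hr
  simp only [nonsing_inv_eq_ringInverse] at hw₁ hw₂ htw₂ ⊢
  have hd : IsUnit (w₁ r - w₂ r) := by simpa using (hinvw r hr).neg
  refine ⟨htu₂ r ▸ hd.mul (hinv₂ r hr), ?_⟩
  have hw₁' : HasDerivAt w₁ (V r - E₁ • 1 - w₁ r ^ 2) r := by
    rw [funext hw₁]
    exact hasDerivAt_superpotential_of_schrodinger (hasDerivAt_iff.2 (hu₁ r hr))
      (hasDerivAt_iff.2 (hu₁' r hr)) (hinv₁ r hr) (heq₁ r hr)
  have hw₂' : HasDerivAt w₂ (V r - E₂ • 1 - w₂ r ^ 2) r := by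
    rw [funext hw₂]
    exact hasDerivAt_superpotential_of_schrodinger (hasDerivAt_iff.2 (hu₂ r hr))
      (hasDerivAt_iff.2 (hu₂' r hr)) (hinv₂ r hr) (heq₂ r hr)
  have htu₂'_eq : tu₂' r = ((E₂ - E₁) • 1 - w₁ r ^ 2 + w₂ r ^ 2) * u₂ r
      + (w₁ r - w₂ r) * u₂' r := by
    refine (hasDerivAt_iff.2 (htu₂' r hr)).unique ?_
    rw [funext htu₂]
    refine ((hw₁'.sub hw₂').mul (hasDerivAt_iff.2 (hu₂ r hr))).congr_deriv ?_
    rw [Pi.sub_apply, sub_smul]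
    congr 2
    abel
  rw [htw₂, htu₂'_eq, htu₂, leibniz_mul_ringInverse hd (hinv₂ r hr), ← hw₂,
    twofold_superpotential_identity hd]

/-- The two-fold superpotential `W₂ = w₁ + w̃₂` of a chain of two SUSY transformations
with factorization energies `E₁, E₂` equals `(E₁ - E₂)(w₂ - w₁)⁻¹`; moreover
`ũ₂ = (w₁ - w₂)u₂` is invertible. -/
theorem twofold_superpotential_eq
    (V u₁ u₁' u₁'' u₂ u₂' u₂'' : ℝ → Matrix (Fin 2) (Fin 2) ℂ) (E₁ E₂ : ℂ)
    (hV : ContinuousOn V (Ioi 0))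
    (hu₁ : ∀ r ∈ Ioi (0:ℝ), ∀ i j, HasDerivAt (fun t => u₁ t i j) (u₁' r i j) r)
    (hu₁' : ∀ r ∈ Ioi (0:ℝ), ∀ i j, HasDerivAt (fun t => u₁' t i j) (u₁'' r i j) r)
    (hu₂ : ∀ r ∈ Ioi (0:ℝ), ∀ i j, HasDerivAt (fun t => u₂ t i j) (u₂' r i j) r)
    (hu₂' : ∀ r ∈ Ioi (0:ℝ), ∀ i j, HasDerivAt (fun t => u₂' t i j) (u₂'' r i j) r)
    (heq₁ : ∀ r ∈ Ioi (0:ℝ), -u₁'' r + V r * u₁ r = E₁ • u₁ r)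
    (heq₂ : ∀ r ∈ Ioi (0:ℝ), -u₂'' r + V r * u₂ r = E₂ • u₂ r)
    (hinv₁ : ∀ r ∈ Ioi (0:ℝ), IsUnit (u₁ r))
    (hinv₂ : ∀ r ∈ Ioi (0:ℝ), IsUnit (u₂ r))
    (w₁ w₂ : ℝ → Matrix (Fin 2) (Fin 2) ℂ)
    (hw₁ : ∀ r, w₁ r = u₁' r * (u₁ r)⁻¹)
    (hw₂ : ∀ r, w₂ r = u₂' r * (u₂ r)⁻¹)
    (hinvw : ∀ r ∈ Ioi (0:ℝ), IsUnit (w₂ r - w₁ r))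
    (tu₂ tu₂' : ℝ → Matrix (Fin 2) (Fin 2) ℂ)
    (htu₂ : ∀ r, tu₂ r = (w₁ r - w₂ r) * u₂ r)
    (htu₂' : ∀ r ∈ Ioi (0:ℝ), ∀ i j, HasDerivAt (fun t => tu₂ t i j) (tu₂' r i j) r)
    (tw₂ : ℝ → Matrix (Fin 2) (Fin 2) ℂ)
    (htw₂ : ∀ r, tw₂ r = tu₂' r * (tu₂ r)⁻¹) :
    ∀ r ∈ Ioi (0:ℝ),
      IsUnit (tu₂ r) ∧
      w₁ r + tw₂ r = (E₁ - E₂) • (w₂ r - w₁ r)⁻¹ :=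
  twofold_superpotential_eq_general V u₁ u₁' u₁'' u₂ u₂' u₂'' E₁ E₂ hu₁ hu₁' hu₂ hu₂' heq₁ heq₂
    hinv₁ hinv₂ w₁ w₂ hw₁ hw₂ hinvw tu₂ tu₂' htu₂ htu₂' tw₂ htw₂
end

section
/- Let u₁, u₂ : (0,∞) → M₂(ℂ) be differentiable matrix-valued functions with u₁(r), u₂(r) invertible for all r, set w_j = u_j'u_j⁻¹, and assume w₁(r) is symmetric and w₂(r) − w₁(r) is invertible for all r. Then W[u₁,u₂](r) is invertible and (w₂(r) − w₁(r))⁻¹ = u₂(r) W[u₁,u₂](r)⁻¹ u₁(r)ᵀ for all r; hence for any E₁, E₂ ∈ ℂ, (E₁−E₂)(w₂(r)−w₁(r))⁻¹ = (E₁−E₂) u₂(r) W[u₁,u₂](r)⁻¹ u₁(r)ᵀ. -/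
open Matrix Set

/-- If `w₁` is symmetric and `w₂ - w₁` is invertible, the Wronskian `W[u₁,u₂]` is
invertible and `(w₂ - w₁)⁻¹ = u₂ W[u₁,u₂]⁻¹ u₁ᵀ`; hence the two-fold superpotential
`(E₁-E₂)(w₂-w₁)⁻¹` has the Wronskian representation `(E₁-E₂) u₂ W[u₁,u₂]⁻¹ u₁ᵀ`. -/
theorem twofold_superpotential_wronskian_representation
    (u₁ u₁' u₂ u₂' : ℝ → Matrix (Fin 2) (Fin 2) ℂ)
    (hu₁ : ∀ r ∈ Ioi (0:ℝ), ∀ i j, HasDerivAt (fun t => u₁ t i j) (u₁' r i j) r)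
    (hu₂ : ∀ r ∈ Ioi (0:ℝ), ∀ i j, HasDerivAt (fun t => u₂ t i j) (u₂' r i j) r)
    (hinv₁ : ∀ r ∈ Ioi (0:ℝ), IsUnit (u₁ r))
    (hinv₂ : ∀ r ∈ Ioi (0:ℝ), IsUnit (u₂ r))
    (w₁ w₂ : ℝ → Matrix (Fin 2) (Fin 2) ℂ)
    (hw₁ : ∀ r, w₁ r = u₁' r * (u₁ r)⁻¹)
    (hw₂ : ∀ r, w₂ r = u₂' r * (u₂ r)⁻¹)
    (hw₁sym : ∀ r ∈ Ioi (0:ℝ), (w₁ r)ᵀ = w₁ r)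
    (hinvw : ∀ r ∈ Ioi (0:ℝ), IsUnit (w₂ r - w₁ r))
    (W : ℝ → Matrix (Fin 2) (Fin 2) ℂ)
    (hW : ∀ r, W r = (u₁ r)ᵀ * u₂' r - (u₁' r)ᵀ * u₂ r) :
    ∀ r ∈ Ioi (0:ℝ),
      IsUnit (W r) ∧
      (w₂ r - w₁ r)⁻¹ = u₂ r * (W r)⁻¹ * (u₁ r)ᵀ ∧
      ∀ E₁ E₂ : ℂ,
        (E₁ - E₂) • (w₂ r - w₁ r)⁻¹ = (E₁ - E₂) • (u₂ r * (W r)⁻¹ * (u₁ r)ᵀ) := by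
  intro r hr
  have h1 : u₁' r = w₁ r * u₁ r := by
    rw [hw₁, Matrix.nonsing_inv_mul_cancel_right _ _ ((Matrix.isUnit_iff_isUnit_det _).mp (hinv₁ r hr))]
  have h2 : u₂' r = w₂ r * u₂ r := by
    rw [hw₂, Matrix.nonsing_inv_mul_cancel_right _ _ ((Matrix.isUnit_iff_isUnit_det _).mp (hinv₂ r hr))]
  have hWfac : W r = (u₁ r)ᵀ * (w₂ r - w₁ r) * u₂ r := by
    rw [hW, h1, h2, Matrix.transpose_mul, hw₁sym r hr]
    noncomm_ring
  have hU1T : IsUnit (u₁ r)ᵀ := (Matrix.isUnit_transpose (u₁ r)).mpr (hinv₁ r hr)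
  have hWu : IsUnit (W r) := by
    rw [hWfac]
    exact (hU1T.mul (hinvw r hr)).mul (hinv₂ r hr)
  have hmain : (w₂ r - w₁ r)⁻¹ = u₂ r * (W r)⁻¹ * (u₁ r)ᵀ := by
    have hWinv : (W r)⁻¹ = (u₂ r)⁻¹ * ((w₂ r - w₁ r)⁻¹ * ((u₁ r)ᵀ)⁻¹) := by
      rw [hWfac, Matrix.mul_inv_rev, Matrix.mul_inv_rev]
    rw [hWinv]
    rw [Matrix.mul_nonsing_inv_cancel_left _ _ ((Matrix.isUnit_iff_isUnit_det _).mp (hinv₂ r hr))]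
    rw [Matrix.nonsing_inv_mul_cancel_right _ _ ((Matrix.isUnit_iff_isUnit_det _).mp hU1T)]
  exact ⟨hWu, hmain, fun E₁ E₂ => by rw [hmain]⟩
end

section
/- Let δ₁, δ₂, ε₀ ∈ ℝ, let R(θ) = [[cos θ, −sin θ],[sin θ, cos θ]] be the 2×2 rotation matrix, and let S₀ = R(ε₀) · diag(e^{2iδ₁}, e^{2iδ₂}) · R(ε₀)ᵀ. Let l₁ ∈ ℤ, m ∈ ℤ, l₂ = l₁ + 2m, k ≥ 0, χ > 0, s ∈ {+1,−1}, N = √(k⁴+4χ⁴), and O = diag(i^{l₂}, i^{l₁}) · (1/N)·[[−k², −2sχ²],[2sχ², −k²]] · diag(i^{−l₁}, i^{−l₂}). Then O S₀ Oᵀ = R(ε₂) · diag(e^{2iδ₂}, e^{2iδ₁}) · R(ε₂)ᵀ where ε₂ = ε₀ + s·(−1)^m·arctan(k²/(2χ²)). In particular O S₀ Oᵀ has the same eigenvalues e^{2iδ₁}, e^{2iδ₂} as S₀ (the eigenphase shifts are preserved, exchanged between channels), while the mixing angle is shifted by ± (−1)^m arctan(k²/(2χ²)). -/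
open Matrix Real

/-- The eigenphase preserving transformation `S₂ = O S₀ Oᵀ` exchanges the eigenphase
shifts between the channels and shifts the mixing angle by
`± (-1)^m arctan(k²/(2χ²))`. -/
theorem eigenphase_preserving_S_matrix_transformation
    (δ₁ δ₂ ε₀ : ℝ)
    (R : ℝ → Matrix (Fin 2) (Fin 2) ℂ)
    (hR : ∀ θ : ℝ, R θ = !![(Real.cos θ : ℂ), -(Real.sin θ : ℂ);
                            (Real.sin θ : ℂ), (Real.cos θ : ℂ)])
    (S₀ : Matrix (Fin 2) (Fin 2) ℂ)
    (hS₀ : S₀ = R ε₀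
      * Matrix.diagonal ![Complex.exp (2 * Complex.I * (δ₁:ℂ)),
                          Complex.exp (2 * Complex.I * (δ₂:ℂ))]
      * (R ε₀)ᵀ)
    (l₁ m : ℤ) (l₂ : ℤ) (hl₂ : l₂ = l₁ + 2 * m)
    (k χ s : ℝ) (hk : 0 ≤ k) (hχ : 0 < χ) (hs : s = 1 ∨ s = -1)
    (N : ℝ) (hN : N = Real.sqrt (k ^ 4 + 4 * χ ^ 4))
    (O : Matrix (Fin 2) (Fin 2) ℂ)
    (hO : O = Matrix.diagonal ![Complex.I ^ l₂, Complex.I ^ l₁]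
      * ((N : ℂ)⁻¹ • !![-(k:ℂ)^2, -2*(s:ℂ)*(χ:ℂ)^2; 2*(s:ℂ)*(χ:ℂ)^2, -(k:ℂ)^2])
      * Matrix.diagonal ![Complex.I ^ (-l₁), Complex.I ^ (-l₂)])
    (ε₂ : ℝ)
    (hε₂ : ε₂ = ε₀ + s * (-1:ℝ)^m * Real.arctan (k^2 / (2 * χ^2))) :
    O * S₀ * Oᵀ = R ε₂
      * Matrix.diagonal ![Complex.exp (2 * Complex.I * (δ₂:ℂ)),
                          Complex.exp (2 * Complex.I * (δ₁:ℂ))]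
      * (R ε₂)ᵀ := by
  -- rotation matrices multiply by adding angles, transpose negates the angle
  have Rmul : ∀ a b : ℝ, R a * R b = R (a + b) := by
    intro a b
    rw [hR, hR, hR]
    ext i j
    fin_cases i <;> fin_cases j <;>
      simp [Matrix.mul_apply, Fin.sum_univ_two, Real.cos_add, Real.sin_add] <;> ring
  have RT : ∀ a : ℝ, (R a)ᵀ = R (-a) := by
    intro a
    rw [hR, hR]
    ext i j
    fin_cases i <;> fin_cases j <;> simp [Real.cos_neg, Real.sin_neg]
  set σ : ℝ := s * (-1:ℝ)^m with hσdef
  set φ : ℝ := Real.arctan (k^2 / (2 * χ^2)) with hφdef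
  set ψ : ℝ := σ * φ - σ * (π/2) with hψdef
  -- basic positivity
  have hN0 : 0 < N := by rw [hN]; positivity
  -- σ is ±1
  have hμr : ((-1:ℝ)^m) * ((-1:ℝ)^m) = 1 := by
    rw [← zpow_add₀ (by norm_num : (-1:ℝ) ≠ 0), show m + m = 2*m by ring, _root_.zpow_mul]
    norm_num
  have hσpm : σ = 1 ∨ σ = -1 := by
    rcases hs with h | h <;> rcases Int.even_or_odd m with he | ho
    · left; rw [hσdef, h, he.neg_one_zpow]; norm_num
    · right; rw [hσdef, h, ho.neg_one_zpow]; norm_num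
    · right; rw [hσdef, h, he.neg_one_zpow]; norm_num
    · left; rw [hσdef, h, ho.neg_one_zpow]; norm_num
  -- trigonometry of the arctan angle
  have hsq : Real.sqrt (1 + (k^2 / (2*χ^2))^2) = N / (2*χ^2) := by
    rw [show 1 + (k^2/(2*χ^2))^2 = (k^4 + 4*χ^4)/(2*χ^2)^2 by field_simp; ring,
      Real.sqrt_div (by positivity), Real.sqrt_sq (by positivity), hN]
  have hcφ : Real.cos φ = 2*χ^2/N := by
    rw [hφdef, Real.cos_arctan, hsq]; field_simp
  have hsφ : Real.sin φ = k^2/N := by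
    rw [hφdef, Real.sin_arctan, hsq]; field_simp
  have hcψ : Real.cos ψ = k^2/N := by
    rcases hσpm with h | h <;> rw [hψdef, h] <;>
      simp [Real.cos_sub, Real.sin_sub, Real.cos_add, Real.sin_add, Real.cos_neg,
        Real.sin_neg, hcφ, hsφ] <;> ring
  have hsψ : Real.sin ψ = -σ * (2*χ^2/N) := by
    rcases hσpm with h | h <;> rw [hψdef, h] <;>
      simp [Real.cos_sub, Real.sin_sub, Real.cos_add, Real.sin_add, Real.cos_neg,
        Real.sin_neg, hcφ, hsφ, h] <;> ring
  -- O is a real rotation matrix up to sign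
  have hIne : ∀ n : ℤ, Complex.I ^ n ≠ 0 := fun n => zpow_ne_zero n Complex.I_ne_zero
  have hμ2 : ((-1:ℂ)^m) * ((-1:ℂ)^m) = 1 := by
    rw [← zpow_add₀ (by norm_num : (-1:ℂ) ≠ 0), show m + m = 2*m by ring, _root_.zpow_mul]
    norm_num
  have hI1 : Complex.I ^ l₂ * (Complex.I ^ l₁)⁻¹ = (-1:ℂ)^m := by
    rw [← _root_.zpow_neg, ← zpow_add₀ Complex.I_ne_zero, show l₂ + -l₁ = 2*m by omega,
      _root_.zpow_mul, show (Complex.I ^ (2:ℤ)) = -1 by rw [zpow_two, Complex.I_mul_I]]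
  have hI2 : Complex.I ^ l₁ * (Complex.I ^ l₂)⁻¹ = (-1:ℂ)^m := by
    rw [← _root_.zpow_neg, ← zpow_add₀ Complex.I_ne_zero, show l₁ + -l₂ = 2*(-m) by omega,
      _root_.zpow_mul, show (Complex.I ^ (2:ℤ)) = -1 by rw [zpow_two, Complex.I_mul_I],
      _root_.zpow_neg, ← _root_.inv_zpow, inv_neg, inv_one]
  have hI3 : Complex.I ^ l₂ * (Complex.I ^ l₂)⁻¹ = 1 := mul_inv_cancel₀ (hIne l₂)
  have hI4 : Complex.I ^ l₁ * (Complex.I ^ l₁)⁻¹ = 1 := mul_inv_cancel₀ (hIne l₁)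
  have hOR : O = ((-((-1:ℝ)^m) : ℝ) : ℂ) • R ψ := by
    rw [hO, hR]
    ext i j
    fin_cases i <;> fin_cases j <;>
      simp [Matrix.mul_apply, Fin.sum_univ_two, Matrix.diagonal, Matrix.vecHead,
        Matrix.vecTail, _root_.zpow_neg, hcψ, hsψ, hσdef]
    · linear_combination ((k:ℂ)^2 * (N:ℂ)⁻¹) * hI1
    · linear_combination (2*(s:ℂ)*(χ:ℂ)^2 * (N:ℂ)⁻¹) * hI3 -
        ((s:ℂ)*2*(χ:ℂ)^2*(N:ℂ)⁻¹) * hμ2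
    · linear_combination (2*(s:ℂ)*(χ:ℂ)^2 * (N:ℂ)⁻¹) * hI4 -
        ((s:ℂ)*2*(χ:ℂ)^2*(N:ℂ)⁻¹) * hμ2
    · linear_combination ((k:ℂ)^2 * (N:ℂ)⁻¹) * hI2
  -- the sign squares to one
  have hc2 : ((-((-1:ℝ)^m) : ℝ) : ℂ) * ((-((-1:ℝ)^m) : ℝ) : ℂ) = 1 := by
    rw [← Complex.ofReal_mul, show (-((-1:ℝ)^m)) * (-((-1:ℝ)^m)) = 1 by
      rw [neg_mul_neg, hμr], Complex.ofReal_one]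
  -- conjugating a diagonal by a quarter rotation swaps the entries
  have hswap : R (-(σ*(π/2)))
      * Matrix.diagonal ![Complex.exp (2 * Complex.I * (δ₁:ℂ)),
                          Complex.exp (2 * Complex.I * (δ₂:ℂ))]
      * R (σ*(π/2))
      = Matrix.diagonal ![Complex.exp (2 * Complex.I * (δ₂:ℂ)),
                          Complex.exp (2 * Complex.I * (δ₁:ℂ))] := by
    rcases hσpm with h | h <;> rw [h] <;> rw [hR, hR] <;> ext i j <;>
      fin_cases i <;> fin_cases j <;>
      simp [Matrix.mul_apply, Fin.sum_univ_two, Matrix.diagonal, Matrix.vecHead,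
        Matrix.vecTail]
  -- assemble
  rw [hS₀, hOR, Matrix.transpose_smul, RT, RT, RT, Matrix.smul_mul, Matrix.smul_mul,
    Matrix.mul_smul, smul_smul, hc2, one_smul]
  simp only [← Matrix.mul_assoc]
  rw [Rmul ψ ε₀, Matrix.mul_assoc (R (ψ + ε₀) * _), Rmul (-ε₀) (-ψ),
    show ψ + ε₀ = ε₂ + -(σ*(π/2)) by rw [hψdef, hε₂]; ring,
    show -ε₀ + -ψ = σ*(π/2) + -ε₂ by rw [hψdef, hε₂]; ring,
    ← Rmul ε₂ (-(σ*(π/2))), ← Rmul (σ*(π/2)) (-ε₂), ← hswap]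
  simp only [Matrix.mul_assoc]
end
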